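/- Let A be real symmetric with smallest eigenvalue λ_{T-1}, and d ∈ ℝ^{T-1} nonzero with nonzero component along the eigenvector of λ_{T-1}. Then the map ν ↦ ‖(A + 2νI)⁻¹ d‖² is strictly monotonically decreasing on (-λ_{T-1}/2, +∞), tends to +∞ as ν → (-λ_{T-1}/2)⁺, and tends to 0 as ν → +∞; hence for any γ > 0 there is a unique ν in this interval with ‖(A+2νI)⁻¹d‖² = γ. -/

import Mathlib

/-!
Writing `A = ∑ λᵢ vᵢvᵢᵀ` with orthonormal `vᵢ`, the resolvent is `(A + 2νI)⁻¹ = ∑ (λᵢ + 2ν)⁻¹ vᵢvᵢᵀ`,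
so `‖(A + 2νI)⁻¹ d‖² = ∑ (vᵢ ⬝ d)² / (λᵢ + 2ν)²`. For `ν > -λ_min/2` every denominator is positive
and increasing in `ν`, and one weight `(vᵢ ⬝ d)²` with `λᵢ = λ_min` is positive: this term makes the
sum strictly decreasing and blow up at `-λ_min/2`, while all terms vanish as `ν → ∞`. Continuity
and the intermediate value theorem then give a unique solution of `‖(A + 2νI)⁻¹ d‖² = γ`.
-/

open Matrix Set Filter Topology

section Orthonormal

variable {ι : Type*} [Fintype ι] {v : ι → ι → ℝ}

theorem sum_smul_vecMulVec_mulVec (a : ι → ℝ) (d : ι → ℝ) :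
    (∑ i, a i • vecMulVec (v i) (v i)) *ᵥ d = ∑ i, (a i * (v i ⬝ᵥ d)) • v i := by
  simp [sum_mulVec, smul_mulVec, vecMulVec_mulVec, mul_smul]

variable [DecidableEq ι]

theorem sum_vecMulVec_self_eq_one (hv : ∀ i j, v i ⬝ᵥ v j = if i = j then 1 else 0) :
    ∑ i, vecMulVec (v i) (v i) = 1 := by
  -- the square matrix with orthonormal rows `v i` is orthogonal, so its columns are orthonormal too
  have hrows : of v * (of v)ᵀ = 1 := by
    ext i j
    simpa [mul_apply, dotProduct, one_apply] using hv i j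
  have hcols := mul_eq_one_comm.mp hrows
  ext j k
  simpa [mul_apply, vecMulVec_apply, Matrix.sum_apply] using congrFun₂ hcols j k

theorem sum_smul_vecMulVec_mul_sum_smul_vecMulVec
    (hv : ∀ i j, v i ⬝ᵥ v j = if i = j then 1 else 0) (a b : ι → ℝ) :
    (∑ i, a i • vecMulVec (v i) (v i)) * ∑ i, b i • vecMulVec (v i) (v i) =
      ∑ i, (a i * b i) • vecMulVec (v i) (v i) := by
  simp_rw [Finset.sum_mul, Finset.mul_sum, smul_mul_smul_comm, vecMulVec_mul_vecMulVec, hv,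
    ite_smul, one_smul, zero_smul]
  simp [apply_ite]

theorem inv_sum_smul_vecMulVec (hv : ∀ i j, v i ⬝ᵥ v j = if i = j then 1 else 0)
    {a : ι → ℝ} (ha : ∀ i, a i ≠ 0) :
    (∑ i, a i • vecMulVec (v i) (v i))⁻¹ = ∑ i, (a i)⁻¹ • vecMulVec (v i) (v i) := by
  refine inv_eq_right_inv ?_
  simp [sum_smul_vecMulVec_mul_sum_smul_vecMulVec hv, ha, sum_vecMulVec_self_eq_one hv]

theorem sum_smul_vecMulVec_add_smul_one (hv : ∀ i j, v i ⬝ᵥ v j = if i = j then 1 else 0)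
    (lam : ι → ℝ) (c : ℝ) :
    ∑ i, lam i • vecMulVec (v i) (v i) + c • (1 : Matrix ι ι ℝ) =
      ∑ i, (lam i + c) • vecMulVec (v i) (v i) := by
  simp [← sum_vecMulVec_self_eq_one hv, Finset.smul_sum, add_smul, Finset.sum_add_distrib]

theorem dotProduct_self_sum_smul (hv : ∀ i j, v i ⬝ᵥ v j = if i = j then 1 else 0)
    (c : ι → ℝ) : (∑ i, c i • v i) ⬝ᵥ (∑ i, c i • v i) = ∑ i, c i ^ 2 := by
  simp [sum_dotProduct, dotProduct_sum, hv, sq]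

theorem sum_sq_inv_add_smul_one_mulVec (hv : ∀ i j, v i ⬝ᵥ v j = if i = j then 1 else 0)
    (lam : ι → ℝ) {c : ℝ} (hc : ∀ i, lam i + c ≠ 0) (d : ι → ℝ) :
    ∑ j, ((∑ i, lam i • vecMulVec (v i) (v i) + c • (1 : Matrix ι ι ℝ))⁻¹ *ᵥ d) j ^ 2 =
      ∑ i, (v i ⬝ᵥ d) ^ 2 / (lam i + c) ^ 2 := by
  rw [sum_smul_vecMulVec_add_smul_one hv, inv_sum_smul_vecMulVec hv hc,
    sum_smul_vecMulVec_mulVec]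
  trans ∑ i, ((lam i + c)⁻¹ * (v i ⬝ᵥ d)) ^ 2
  · rw [← dotProduct_self_sum_smul hv fun i => (lam i + c)⁻¹ * (v i ⬝ᵥ d)]
    simp only [dotProduct, sq]
  · simp [mul_pow, div_eq_inv_mul]

end Orthonormal

section Secular

variable {ι : Type*} [Fintype ι]

noncomputable def secularFun (w lam : ι → ℝ) (ν : ℝ) : ℝ := ∑ i, w i / (lam i + 2 * ν) ^ 2

variable {w lam : ι → ℝ} {L : ℝ}

theorem secularFun_strictAntiOn (hw : ∀ i, 0 ≤ w i) {i₀ : ι} (hw₀ : 0 < w i₀)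
    (hL : ∀ i, L ≤ lam i) : StrictAntiOn (secularFun w lam) (Ioi (-L / 2)) := by
  intro a ha b hb hab
  have hpos : ∀ i, 0 < lam i + 2 * a := fun i => by linarith [hL i, mem_Ioi.1 ha]
  have hlt : ∀ i, (lam i + 2 * a) ^ 2 < (lam i + 2 * b) ^ 2 := fun i =>
    pow_lt_pow_left₀ (by linarith) (hpos i).le two_ne_zero
  exact Finset.sum_lt_sum
    (fun i _ => div_le_div_of_nonneg_left (hw i) (pow_pos (hpos i) 2) (hlt i).le)
    ⟨i₀, Finset.mem_univ _, div_lt_div_of_pos_left hw₀ (pow_pos (hpos i₀) 2) (hlt i₀)⟩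

theorem continuousOn_secularFun (hL : ∀ i, L ≤ lam i) :
    ContinuousOn (secularFun w lam) (Ioi (-L / 2)) := by
  refine continuousOn_finsetSum _ fun i _ => continuousOn_const.div (by fun_prop) ?_
  intro ν hν
  have : 0 < lam i + 2 * ν := by linarith [hL i, mem_Ioi.1 hν]
  positivity

theorem tendsto_secularFun_nhdsGT (hw : ∀ i, 0 ≤ w i) {i₀ : ι} (hw₀ : 0 < w i₀) :
    Tendsto (secularFun w lam) (𝓝[>] (-lam i₀ / 2)) atTop := by
  have hden : Tendsto (fun ν => (lam i₀ + 2 * ν) ^ 2) (𝓝[>] (-lam i₀ / 2)) (𝓝[>] 0) := by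
    refine tendsto_nhdsWithin_of_tendsto_nhds_of_eventually_within _ ?_ ?_
    · exact (Continuous.tendsto' (by fun_prop) _ _ (by ring)).mono_left nhdsWithin_le_nhds
    · filter_upwards [self_mem_nhdsWithin] with ν hν
      have : 0 < lam i₀ + 2 * ν := by linarith [mem_Ioi.1 hν]
      exact mem_Ioi.2 (by positivity)
  refine tendsto_atTop_mono (fun ν => ?_) ((tendsto_inv_nhdsGT_zero.comp hden).const_mul_atTop hw₀)
  exact Finset.single_le_sum (f := fun i => w i / (lam i + 2 * ν) ^ 2)
    (fun i _ => div_nonneg (hw i) (sq_nonneg _)) (Finset.mem_univ i₀)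

theorem tendsto_secularFun_atTop (w lam : ι → ℝ) : Tendsto (secularFun w lam) atTop (𝓝 0) := by
  have := tendsto_finsetSum Finset.univ fun i _ =>
    (tendsto_const_nhds (x := w i)).div_atTop
      ((tendsto_pow_atTop two_ne_zero).comp
        (tendsto_atTop_add_const_left _ (lam i) (tendsto_id.const_mul_atTop two_pos)))
  unfold secularFun
  simpa using this

end Secular

theorem existsUnique_eq_of_strictAntiOn_Ioi {f : ℝ → ℝ} {a b γ : ℝ}
    (hanti : StrictAntiOn f (Ioi a)) (hcont : ContinuousOn f (Ioi a))
    (hleft : Tendsto f (𝓝[>] a) atTop) (hright : Tendsto f atTop (𝓝 b)) (hγ : b < γ) :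
    ∃! x, a < x ∧ f x = γ := by
  obtain ⟨x, hxγ, hx⟩ := ((hleft.eventually (eventually_ge_atTop γ)).and self_mem_nhdsWithin).exists
  obtain ⟨y, hyγ, hy⟩ := ((hright.eventually (ge_mem_nhds hγ)).and (eventually_gt_atTop a)).exists
  obtain ⟨z, hz, hfz⟩ := isPreconnected_Ioi.intermediate_value hy hx hcont ⟨hyγ, hxγ⟩
  exact ⟨z, ⟨hz, hfz⟩, fun z' hz' => hanti.injOn hz'.1 hz (hz'.2.trans hfz.symm)⟩

/-- Mirror statement on the interval (-λ_{T-1}/2, +∞), where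
λ_{T-1} is the smallest eigenvalue: the map ν ↦ ‖(A+2νI)⁻¹d‖² is strictly
decreasing, tends to +∞ at the left endpoint and to 0 at +∞; hence for any
γ > 0 there is a unique ν in this interval attaining γ. -/
theorem stmt2 (n : ℕ) (hn : 0 < n)
    (A : Matrix (Fin n) (Fin n) ℝ)
    (lam : Fin n → ℝ) (v : Fin n → Fin n → ℝ)
    (horth : ∀ i j, v i ⬝ᵥ v j = if i = j then (1:ℝ) else 0)
    (hdecomp : A = ∑ i, lam i • Matrix.vecMulVec (v i) (v i))
    (hdesc : Antitone lam)
    (d : Fin n → ℝ)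
    (hd1 : ∃ i, lam i = lam ⟨n-1, by omega⟩ ∧ v i ⬝ᵥ d ≠ 0)
    (p : ℝ → ℝ)
    (hp : ∀ ν, p ν = ∑ j, (((A + (2*ν) • (1 : Matrix (Fin n) (Fin n) ℝ))⁻¹.mulVec d) j)^2) :
    StrictAntiOn p (Set.Ioi (-(lam ⟨n-1, by omega⟩)/2)) ∧
    Tendsto p (𝓝[>] (-(lam ⟨n-1, by omega⟩)/2)) atTop ∧
    Tendsto p atTop (𝓝 0) ∧
    ∀ γ : ℝ, 0 < γ → ∃! ν : ℝ, -(lam ⟨n-1, by omega⟩)/2 < ν ∧ p ν = γ := by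
  obtain ⟨i₀, hi₀, hvd⟩ := hd1
  set L := lam ⟨n - 1, by omega⟩
  have hL : ∀ i, L ≤ lam i := fun i => hdesc (Fin.le_def.2 (Nat.le_sub_one_of_lt i.2))
  have hw : ∀ i, 0 ≤ (v i ⬝ᵥ d) ^ 2 := fun i => sq_nonneg _
  have hw₀ : 0 < (v i₀ ⬝ᵥ d) ^ 2 := by positivity
  have hp_eq : EqOn (secularFun (fun i => (v i ⬝ᵥ d) ^ 2) lam) p (Ioi (-L / 2)) := fun ν hν => by
    rw [hp, hdecomp, sum_sq_inv_add_smul_one_mulVec horth]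
    · rfl
    · exact fun i => by linarith [hL i, mem_Ioi.1 hν]
  have hanti := (secularFun_strictAntiOn hw hw₀ hL).congr hp_eq
  have hleft : Tendsto p (𝓝[>] (-L / 2)) atTop :=
    (hi₀ ▸ tendsto_secularFun_nhdsGT (lam := lam) hw hw₀).congr' hp_eq.eventuallyEq_nhdsWithin
  have hright : Tendsto p atTop (𝓝 0) :=
    (tendsto_secularFun_atTop _ lam).congr' (eventuallyEq_of_mem (Ioi_mem_atTop _) hp_eq)
  exact ⟨hanti, hleft, hright, fun γ hγ => existsUnique_eq_of_strictAntiOn_Ioi hanti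
    ((continuousOn_secularFun hL).congr hp_eq.symm) hleft hright hγ⟩
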